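/- (The gap sequence of E_{m,2} is Θ₂.) For every m ≥ 1 and every p ≥ 1: L(E_{m,2},p+1) − L(E_{m,2},p) = 2^{m−1} if Θ₂[p] = a, = 7·2^{m−1} if Θ₂[p] = b, and = 3·2^{m−1} if Θ₂[p] = c. -/

import Mathlib

namespace PD

/-- The period-doubling substitution on the alphabet `Bool`,
where `false` stands for the letter `a` and `true` for the letter `b`:
`σ(a) = ab`, `σ(b) = aa`. -/
def sub : Bool → List Bool
  | false => [false, true]
  | true  => [false, false]

/-- The substitution applied to a finite word. -/
def subW (w : List Bool) : List Bool := w.flatMap sub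

/-- `A m = σ^m(a)`. -/
def A (m : ℕ) : List Bool := subW^[m] [false]

/-- `B m = σ^m(b)`. -/
def B (m : ℕ) : List Bool := subW^[m] [true]

/-- The doubling sequence `D∞` (0-indexed: `D n` is the `(n+1)`-th letter),
the fixed point of `σ` beginning with `a`; `A m` is a prefix of `A (m+1)`,
and `A (n+1)` has length `2^(n+1) > n`. -/
def D (n : ℕ) : Bool := (A (n + 1)).getD n false

/-- `δ m`, the last letter of `A m`. -/
def delta (m : ℕ) : Bool := (A m).getLastD false

/-- The envelope words (`i ∈ {1,2}`): `E m 1 = A m` minus its last letter,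
`E m 2 = A (m-1) ++ (A m` minus its last letter `)`. -/
def E (m i : ℕ) : List Bool :=
  if i = 1 then (A m).dropLast else A (m - 1) ++ (A m).dropLast

/-- `w` occurs at the (1-indexed) position `j` in the finite word `τ`. -/
def OccursIn (w τ : List Bool) (j : ℕ) : Prop :=
  1 ≤ j ∧ (τ.drop (j - 1)).take w.length = w

/-- `w` occurs at the (1-indexed) position `j` in the doubling sequence. -/
def OccursD (w : List Bool) (j : ℕ) : Prop :=
  1 ≤ j ∧ ∀ k < w.length, D (j - 1 + k) = w.getD k false

/-- `w` is a factor of the doubling sequence. -/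
def FactorD (w : List Bool) : Prop := ∃ j, OccursD w j

/-- `L w p`: the (1-indexed) starting position of the `p`-th occurrence of `w`
in the doubling sequence, occurrences being ordered by starting position.
(Each factor occurs infinitely often, so `Nat.nth` enumerates all occurrences
in increasing order.) -/
noncomputable def L (w : List Bool) (p : ℕ) : ℕ := Nat.nth (OccursD w) (p - 1)

/-- The strict total order on envelope words:
`E m₁ i₁ ⊏ E m₂ i₂` iff `m₁ < m₂`, or `m₁ = m₂` and `i₁ < i₂`. -/
def EnvLt (m₁ i₁ m₂ i₂ : ℕ) : Prop := m₁ < m₂ ∨ (m₁ = m₂ ∧ i₁ < i₂)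

/-- `Env(w) = E m i`: the envelope word `E m i` is the `⊏`-minimal envelope
word containing `w` as a factor. -/
def IsEnv (w : List Bool) (m i : ℕ) : Prop :=
  1 ≤ m ∧ (i = 1 ∨ i = 2) ∧ w <:+: E m i ∧
    ∀ m' i', 1 ≤ m' → (i' = 1 ∨ i' = 2) → EnvLt m' i' m i → ¬ w <:+: E m' i'

/-- The substitution `φ₁(a) = a`, `φ₁(b) = bb`. -/
def phi1 : Bool → List Bool
  | false => [false]
  | true  => [true, true]

/-- `Θ₁ = φ₁(D∞)` (0-indexed): `φ₁(A (n+1))` is a prefix of `Θ₁` of length `> n`. -/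
def Theta1 (n : ℕ) : Bool := ((A (n + 1)).flatMap phi1).getD n false

/-- The substitution `φ₂(a) = ab`, `φ₂(b) = acac`, over the alphabet `Fin 3`
where `0` stands for `a`, `1` for `b` and `2` for `c`. -/
def phi2 : Bool → List (Fin 3)
  | false => [0, 1]
  | true  => [0, 2, 0, 2]

/-- `Θ₂ = φ₂(D∞)` (0-indexed). -/
def Theta2 (n : ℕ) : Fin 3 := ((A (n + 1)).flatMap phi2).getD n 0

/-- `N₁(x,p)`: the number of letters `x` among the first `p` letters of `Θ₁`. -/
def N1 (x : Bool) (p : ℕ) : ℕ := ((List.range p).map Theta1).count x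

/-- `N₂(x,p)`: the number of letters `x` among the first `p` letters of `Θ₂`. -/
def N2 (x : Fin 3) (p : ℕ) : ℕ := ((List.range p).map Theta2).count x

end PD

open PD

/-! The doubling sequence satisfies `D(2k) = a` and `D(2k+1) = ¬D(k)`. Since `E 1 2 = aa` and
`E (m+1) 2 = σ(E m 2)·a`, the word `E (m+1) 2` occurs exactly at the positions `2^m·n` where `aa`
occurs, and `aa` occurs exactly at `4s+2` and `4s+3` for the `s` with `D(s) = a`. Consecutive `a`'s
of `D∞` are `1` or `2` apart according as the letter after the first one is `a` or `b`, so the gaps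
between consecutive `aa`'s are `1, 3` or `1, 7`. On the other hand `D∞ = σ(D∞)`, and `φ₂` emits for
each `a` of `σ(D∞)` the letters `ab` or `ac` according as the next letter is `b` or `a`: this is
`Θ₂` read through `a ↦ 1`, `b ↦ 7`, `c ↦ 3`. -/

namespace PD

open List

lemma subW_cons (x : Bool) (w : List Bool) : subW (x :: w) = false :: (!x) :: subW w := by
  cases x <;> rfl

lemma subW_append (u v : List Bool) : subW (u ++ v) = subW u ++ subW v := flatMap_append

lemma subW_length (w : List Bool) : (subW w).length = 2 * w.length := by
  induction w with
  | nil => rfl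
  | cons x w ih => simp [subW_cons, ih]; ring

lemma subW_getD_two_mul (w : List Bool) (k : ℕ) : (subW w).getD (2 * k) false = false := by
  induction w generalizing k with
  | nil => rfl
  | cons x w ih =>
    cases k with
    | zero => rw [subW_cons]; rfl
    | succ k => rw [subW_cons, Nat.mul_succ]; exact ih k

lemma subW_getD_two_mul_add_one {w : List Bool} {k : ℕ} (hk : k < w.length) :
    (subW w).getD (2 * k + 1) false = !w.getD k false := by
  induction w generalizing k with
  | nil => simp at hk
  | cons x w ih => cases k <;> simp_all [subW_cons, Nat.mul_succ]

lemma A_succ (m : ℕ) : A (m + 1) = subW (A m) := Function.iterate_succ_apply' _ _ _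

lemma A_length (m : ℕ) : (A m).length = 2 ^ m := by
  induction m with
  | zero => rfl
  | succ m ih => rw [A_succ, subW_length, ih, pow_succ, mul_comm]

lemma A_prefix_A_succ (m : ℕ) : A m <+: A (m + 1) := by
  induction m with
  | zero => exact ⟨[true], rfl⟩
  | succ m ih =>
    obtain ⟨t, ht⟩ := ih
    exact ⟨subW t, by rw [A_succ (m + 1), ← ht, subW_append, ← A_succ, ht]⟩

lemma A_prefix_of_le {m m' : ℕ} (h : m ≤ m') : A m <+: A m' := by
  induction m', h using Nat.le_induction with
  | base => exact prefix_refl _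
  | succ m' _ ih => exact ih.trans (A_prefix_A_succ m')

lemma getD_A {m n : ℕ} (hn : n < 2 ^ m) : (A m).getD n false = D n := by
  have getD_of_prefix {u v : List Bool} (h : u <+: v) (hi : n < u.length) :
      u.getD n false = v.getD n false := by
    obtain ⟨t, rfl⟩ := h
    exact (getD_append _ _ _ _ hi).symm
  have hn' : n < 2 ^ (n + 1) := n.lt_two_pow_self.trans (Nat.pow_lt_pow_succ one_lt_two)
  rw [D, getD_of_prefix (A_prefix_of_le (le_max_left m (n + 1))) (by rwa [A_length]),
    getD_of_prefix (A_prefix_of_le (le_max_right m (n + 1))) (by rwa [A_length])]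

lemma A_eq_map_range (m : ℕ) : A m = (range (2 ^ m)).map D := by
  refine ext_getElem (by simp [A_length]) fun n hn _ => ?_
  rw [← getD_eq_getElem _ false hn, getD_A (by rwa [A_length] at hn)]
  simp

lemma D_two_mul (k : ℕ) : D (2 * k) = false := by
  rw [D, A_succ, subW_getD_two_mul]

lemma D_two_mul_add_one (k : ℕ) : D (2 * k + 1) = !D k := by
  have hk : k < 2 ^ (2 * k + 1) :=
    k.lt_two_pow_self.trans_le (Nat.pow_le_pow_right two_pos (by omega))
  rw [D, A_succ, subW_getD_two_mul_add_one (by rwa [A_length]), getD_A hk]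

def OccursAA (n : ℕ) : Prop := D n = false ∧ D (n + 1) = false

instance : DecidablePred OccursAA := fun _ => inferInstanceAs (Decidable (_ ∧ _))

/-- 0-indexed occurrence: `OccursD w j ↔ 1 ≤ j ∧ OccursAt w (j - 1)`. -/
def OccursAt (w : List Bool) (n : ℕ) : Prop := ∀ k < w.length, D (n + k) = w.getD k false

lemma occursAt_subW_append_false_two_mul_iff {w : List Bool} {i : ℕ} :
    OccursAt (subW w ++ [false]) (2 * i) ↔ OccursAt w i := by
  have hlen : (subW w ++ [false]).length = 2 * w.length + 1 := by simp [subW_length]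
  have heven (t : ℕ) : (subW w ++ [false]).getD (2 * t) false = false := by
    rcases lt_or_ge (2 * t) (subW w).length with h | h
    · rw [getD_append _ _ _ _ h, subW_getD_two_mul]
    · rw [getD_append_right _ _ _ _ h]; simp
  have hodd {t : ℕ} (ht : t < w.length) :
      (subW w ++ [false]).getD (2 * t + 1) false = !w.getD t false := by
    rw [getD_append _ _ _ _ (by rw [subW_length]; omega), subW_getD_two_mul_add_one ht]
  constructor
  · intro h k hk
    have := h (2 * k + 1) (by omega)
    rwa [hodd hk, show 2 * i + (2 * k + 1) = 2 * (i + k) + 1 by ring, D_two_mul_add_one,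
      Bool.not_inj_iff] at this
  · intro h k hk
    obtain ⟨t, rfl | rfl⟩ := k.even_or_odd'
    · rw [heven, ← mul_add, D_two_mul]
    · rw [hodd (by omega), show 2 * i + (2 * t + 1) = 2 * (i + t) + 1 by ring,
        D_two_mul_add_one, h t (by omega)]

lemma not_occursAt_subW_append_false_two_mul_add_one {w : List Bool} (hw : w.head? = some false)
    (i : ℕ) : ¬ OccursAt (subW w ++ [false]) (2 * i + 1) := by
  obtain ⟨w, rfl⟩ : ∃ w', w = false :: w' := by
    cases w with
    | nil => simp at hw
    | cons x w => simp at hw; exact ⟨w, by rw [hw]⟩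
  intro h
  have := h 1 (by simp [subW_cons])
  rw [show 2 * i + 1 + 1 = 2 * (i + 1) by ring, D_two_mul, subW_cons] at this
  simp at this

lemma E_two_one : E 1 2 = [false, false] := rfl

lemma subW_dropLast {w : List Bool} (hw : w ≠ []) :
    (subW w).dropLast = subW w.dropLast ++ [false] := by
  obtain ⟨u, x, rfl⟩ := (eq_nil_or_concat' w).resolve_left hw
  cases x <;> simp [subW, sub]

lemma E_two_succ_succ (m : ℕ) : E (m + 2) 2 = subW (E (m + 1) 2) ++ [false] := by
  have hA : A (m + 1) ≠ [] := ne_nil_of_length_pos (by simp [A_length])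
  simp only [E, if_neg (show (2 : ℕ) ≠ 1 by norm_num), Nat.add_sub_cancel, subW_append,
    append_assoc, ← subW_dropLast hA, ← A_succ]
  rfl

lemma head?_E_two (m : ℕ) : (E (m + 1) 2).head? = some false := by
  simp [E, A_eq_map_range, head?_range, D_two_mul 0]

lemma occursAt_E_two_iff (m j : ℕ) :
    OccursAt (E (m + 1) 2) j ↔ ∃ n, j = 2 ^ m * n ∧ OccursAA n := by
  induction m generalizing j with
  | zero =>
    simp [E_two_one, OccursAt, OccursAA, Nat.le_one_iff_eq_zero_or_eq_one, or_imp, forall_and]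
  | succ m ih =>
    rw [E_two_succ_succ]
    obtain ⟨i, rfl | rfl⟩ := j.even_or_odd'
    · simp only [occursAt_subW_append_false_two_mul_iff, ih, pow_succ, mul_comm _ 2, mul_assoc]
      exact exists_congr fun n => and_congr_left' (by omega)
    · simp only [not_occursAt_subW_append_false_two_mul_add_one (head?_E_two m), false_iff]
      rintro ⟨n, hn, -⟩
      rw [pow_succ, mul_comm _ 2, mul_assoc] at hn
      omega

lemma D_four_mul_add_one (s : ℕ) : D (4 * s + 1) = true := by
  rw [show 4 * s + 1 = 2 * (2 * s) + 1 by ring, D_two_mul_add_one, D_two_mul]; rfl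

lemma D_four_mul_add_three (s : ℕ) : D (4 * s + 3) = D s := by
  rw [show 4 * s + 3 = 2 * (2 * s + 1) + 1 by ring, D_two_mul_add_one, D_two_mul_add_one,
    Bool.not_not]

lemma occursAA_four_mul_add_iff (s i : ℕ) (hi : i < 4) :
    OccursAA (4 * s + i) ↔ (i = 2 ∨ i = 3) ∧ D s = false := by
  have h0 := D_two_mul (2 * s)
  have h2 := D_two_mul (2 * s + 1)
  have h4 := D_two_mul (2 * s + 2)
  have h1 := D_four_mul_add_one s
  have h3 := D_four_mul_add_three s
  simp only [← mul_assoc, mul_add] at h0 h2 h4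
  norm_num at h0 h2 h4
  interval_cases i <;> simp [OccursAA, h0, h1, h2, h3, h4]

lemma count_occursAA_four_mul (s : ℕ) :
    Nat.count OccursAA (4 * s) = 2 * Nat.count (D · = false) s := by
  induction s with
  | zero => rfl
  | succ s ih =>
    rw [mul_add_one, Nat.count_add, ih, Nat.count_succ]
    simp only [Nat.count_succ, Nat.count_zero,
      occursAA_four_mul_add_iff s _ (show 0 < 4 by norm_num),
      occursAA_four_mul_add_iff s _ (show 1 < 4 by norm_num),
      occursAA_four_mul_add_iff s _ (show 2 < 4 by norm_num),
      occursAA_four_mul_add_iff s _ (show 3 < 4 by norm_num)]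
    by_cases hs : D s = false <;> simp [hs, mul_add]

lemma count_occursAA_four_mul_add_two (s : ℕ) :
    Nat.count OccursAA (4 * s + 2) = 2 * Nat.count (D · = false) s := by
  have h0 := occursAA_four_mul_add_iff s 0 (by norm_num)
  have h1 := occursAA_four_mul_add_iff s 1 (by norm_num)
  simp_all [Nat.count_succ, count_occursAA_four_mul]

lemma D_add_one_of_D_eq_true {n : ℕ} (h : D n = true) : D (n + 1) = false := by
  obtain ⟨k, rfl | rfl⟩ := n.even_or_odd'
  · simp [D_two_mul] at h
  · exact D_two_mul (k + 1)

lemma infinite_setOf_D_eq_false : (Set.ofPred (D · = false)).Infinite :=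
  Set.infinite_of_forall_exists_gt fun a => ⟨2 * (a + 1), D_two_mul _, by omega⟩

lemma D_nth_D_eq_false (r : ℕ) : D (Nat.nth (D · = false) r) = false :=
  Nat.nth_mem_of_infinite infinite_setOf_D_eq_false r

lemma count_nth_D_eq_false (r : ℕ) : Nat.count (D · = false) (Nat.nth (D · = false) r) = r :=
  Nat.count_nth_of_infinite infinite_setOf_D_eq_false r

lemma nth_occursAA_two_mul (r : ℕ) :
    Nat.nth OccursAA (2 * r) = 4 * Nat.nth (D · = false) r + 2 := by
  have hocc := (occursAA_four_mul_add_iff _ 2 (by norm_num)).2 ⟨by simp, D_nth_D_eq_false r⟩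
  rw [← Nat.nth_count hocc, count_occursAA_four_mul_add_two, count_nth_D_eq_false]

lemma nth_occursAA_two_mul_add_one (r : ℕ) :
    Nat.nth OccursAA (2 * r + 1) = 4 * Nat.nth (D · = false) r + 3 := by
  have hs := D_nth_D_eq_false r
  have hocc := (occursAA_four_mul_add_iff _ 3 (by norm_num)).2 ⟨by simp, hs⟩
  rw [← Nat.nth_count hocc, Nat.count_succ, count_occursAA_four_mul_add_two,
    count_nth_D_eq_false, if_pos ((occursAA_four_mul_add_iff _ 2 (by norm_num)).2 ⟨by simp, hs⟩)]

lemma nth_D_eq_false_succ (r : ℕ) :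
    Nat.nth (D · = false) (r + 1) =
      Nat.nth (D · = false) r + if D (Nat.nth (D · = false) r + 1) then 2 else 1 := by
  have hcount' : Nat.count (D · = false) (Nat.nth (D · = false) r + 1) = r + 1 := by
    rw [Nat.count_succ, count_nth_D_eq_false, if_pos (D_nth_D_eq_false r)]
  cases h : D (Nat.nth (D · = false) r + 1)
  · rw [← hcount', Nat.nth_count h]; rfl
  · have hcount'' : Nat.count (D · = false) (Nat.nth (D · = false) r + 1 + 1) = r + 1 := by
      rw [Nat.count_succ, hcount', if_neg (by simp [h])]
    rw [← hcount'', Nat.nth_count (D_add_one_of_D_eq_true h)]; rfl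

lemma count_D_eq_false_two_mul_add_two (k : ℕ) :
    Nat.count (D · = false) (2 * k + 2) =
      Nat.count (D · = false) (2 * k) + 1 + if D k then 1 else 0 := by
  rw [Nat.count_succ, Nat.count_succ, D_two_mul_add_one, if_pos (D_two_mul k)]
  cases D k <;> rfl

lemma le_count_D_eq_false_two_mul (k : ℕ) : k ≤ Nat.count (D · = false) (2 * k) := by
  induction k with
  | zero => rfl
  | succ k ih => rw [mul_add_one, count_D_eq_false_two_mul_add_two]; omega

lemma length_flatMap_phi2_map_range (k : ℕ) :
    (((range k).map D).flatMap phi2).length = 2 * Nat.count (D · = false) (2 * k) := by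
  induction k with
  | zero => rfl
  | succ k ih =>
    rw [range_succ, map_append, flatMap_append, length_append, ih, map_singleton,
      flatMap_singleton, mul_add_one, count_D_eq_false_two_mul_add_two]
    cases D k <;> simp [phi2, mul_add]

/-- The block `φ₂(D k)` of `Θ₂` starts after `φ₂(D 0 ⋯ D (k-1))`, whose length is given by
`length_flatMap_phi2_map_range`. -/
lemma Theta2_block {k j : ℕ} (hj : j < (phi2 (D k)).length) :
    Theta2 (2 * Nat.count (D · = false) (2 * k) + j) = (phi2 (D k)).getD j 0 := by
  set n := 2 * Nat.count (D · = false) (2 * k) + j with hn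
  have hk : k + 1 ≤ 2 ^ (n + 1) := by
    have := le_count_D_eq_false_two_mul k
    have := (n + 1).lt_two_pow_self
    omega
  obtain ⟨t, ht⟩ := Nat.exists_eq_add_of_le hk
  have hlen := length_flatMap_phi2_map_range k
  rw [Theta2, A_eq_map_range, ht, range_add, range_succ, map_append, map_append, flatMap_append,
    flatMap_append, map_singleton, flatMap_singleton,
    getD_append _ _ _ _ (by rw [length_append, hlen]; omega),
    getD_append_right _ _ _ _ (by rw [hlen]; omega), hlen, hn, Nat.add_sub_cancel_left]

lemma Theta2_two_mul_count {s : ℕ} (hs : D s = false) :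
    Theta2 (2 * Nat.count (D · = false) s) = 0 ∧
      Theta2 (2 * Nat.count (D · = false) s + 1) = if D (s + 1) then 1 else 2 := by
  obtain ⟨k, rfl | rfl⟩ := s.even_or_odd'
  · have h0 := Theta2_block (k := k) (j := 0)
    have h1 := Theta2_block (k := k) (j := 1)
    rw [D_two_mul_add_one]
    cases hk : D k <;> simp_all [phi2]
  · rw [D_two_mul_add_one, Bool.not_eq_false'] at hs
    have h2 := Theta2_block (k := k) (j := 2)
    have h3 := Theta2_block (k := k) (j := 3)
    rw [Nat.count_succ, if_pos (D_two_mul k), show 2 * k + 1 + 1 = 2 * (k + 1) by ring, D_two_mul]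
    simp_all [phi2, mul_add]

def aaGap : Fin 3 → ℕ
  | 0 => 1
  | 1 => 7
  | 2 => 3

lemma nth_occursAA_succ (q : ℕ) :
    Nat.nth OccursAA (q + 1) = Nat.nth OccursAA q + aaGap (Theta2 q) := by
  obtain ⟨r, rfl | rfl⟩ := q.even_or_odd'
  all_goals
    have hΘ := Theta2_two_mul_count (D_nth_D_eq_false r)
    rw [count_nth_D_eq_false] at hΘ
  · rw [nth_occursAA_two_mul_add_one, nth_occursAA_two_mul, hΘ.1]; rfl
  · rw [show 2 * r + 1 + 1 = 2 * (r + 1) by ring, nth_occursAA_two_mul,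
      nth_occursAA_two_mul_add_one, nth_D_eq_false_succ, hΘ.2]
    cases D (Nat.nth (D · = false) r + 1) <;> simp [aaGap] <;> ring

lemma occursD_E_two_iff (m j : ℕ) :
    OccursD (E (m + 1) 2) j ↔ ∃ n, j = 2 ^ m * n + 1 ∧ OccursAA n := by
  rw [OccursD, ← OccursAt, occursAt_E_two_iff]
  constructor
  · rintro ⟨hj, n, hn, hocc⟩; exact ⟨n, by omega, hocc⟩
  · rintro ⟨n, rfl, hocc⟩; exact ⟨by omega, n, by omega, hocc⟩

lemma L_E_two (m p : ℕ) : L (E (m + 1) 2) (p + 1) = 2 ^ m * Nat.nth OccursAA p + 1 := by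
  have hpos : 0 < 2 ^ m := Nat.two_pow_pos m
  have hcomp : (fun i => OccursD (E (m + 1) 2) (2 ^ m * i + 1)) = OccursAA := by
    ext i
    simp only [occursD_E_two_iff, add_left_inj, Nat.mul_left_cancel_iff hpos, exists_eq_left']
  have hinf : (Set.ofPred (OccursD (E (m + 1) 2))).Infinite := by
    refine Set.infinite_of_forall_exists_gt fun a => ⟨2 ^ m * (8 * a + 2) + 1, ?_, ?_⟩
    · exact (occursD_E_two_iff m _).2 ⟨_, rfl, by
        rw [show 8 * a + 2 = 4 * (2 * a) + 2 by ring, occursAA_four_mul_add_iff _ _ (by norm_num)]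
        exact ⟨by simp, D_two_mul a⟩⟩
    · nlinarith
  rw [L, Nat.add_sub_cancel, ← hcomp]
  exact (Nat.nth_comp_of_strictMono ((strictMono_mul_left_of_pos hpos).add_const 1)
    (fun k hk => by obtain ⟨n, rfl, -⟩ := (occursD_E_two_iff m k).1 hk; exact ⟨n, rfl⟩)
    (fun hfin => absurd hfin hinf)).symm

end PD

/-- The gap sequence of `E m 2` is `Θ₂`: for `m ≥ 1` and `p ≥ 1`, the distance
between the `p`-th and `(p+1)`-th occurrences of `E m 2` is `2^(m-1)` when
`Θ₂[p] = a`, `7·2^(m-1)` when `Θ₂[p] = b`, and `3·2^(m-1)` when `Θ₂[p] = c`. -/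
theorem doubling_gap_sequence_E2 (m : ℕ) (hm : 1 ≤ m) (p : ℕ) (hp : 1 ≤ p) :
    (Theta2 (p - 1) = 0 → L (E m 2) (p + 1) - L (E m 2) p = 2 ^ (m - 1)) ∧
      (Theta2 (p - 1) = 1 → L (E m 2) (p + 1) - L (E m 2) p = 7 * 2 ^ (m - 1)) ∧
      (Theta2 (p - 1) = 2 → L (E m 2) (p + 1) - L (E m 2) p = 3 * 2 ^ (m - 1)) := by
  obtain ⟨m, rfl⟩ := Nat.exists_eq_add_of_le' hm
  obtain ⟨q, rfl⟩ := Nat.exists_eq_add_of_le' hp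
  have hgap :
      L (E (m + 1) 2) (q + 1 + 1) - L (E (m + 1) 2) (q + 1) = 2 ^ m * aaGap (Theta2 q) := by
    rw [L_E_two, L_E_two, nth_occursAA_succ, mul_add]
    omega
  simp only [Nat.add_sub_cancel, hgap]
  refine ⟨fun h => ?_, fun h => ?_, fun h => ?_⟩ <;> simp [h, aaGap, mul_comm]
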